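/- arXiv:1607.08037 — 2 statements merged into one kernel-verified Lean document; each statement's English description precedes it below -/
import Mathlib

section
/- Let f ∈ ℂ[z] be a polynomial of degree d > 1 with leading coefficient a_d, let n ≥ 1, and let z ∈ ℂ with (f^n)'(z) ≠ 0. Then (d^n−1)^{-1}·log|(f^n)'(z)| − g_f(z) = (d^n−1)^{-1}·Σ_{j=0}^{n−1} Σ_c m_c·log[f^j(z), c] + (d−1)·(d^n−1)^{-1}·Σ_{j=0}^{n−1} ((1/2)·log(1+|f^j(z)|²) − g_f(f^j(z))) + (Σ_c m_c·(1/2)·log(1+|c|²) + log d + log|a_d|)·n/(d^n−1), where the sums over c range over the roots c ∈ ℂ of f' and m_c is the multiplicity of c as a root of f'. -/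
open Polynomial MeasureTheory Filter

/-- The `n`-th iterate of a polynomial `f` (as a polynomial). -/
noncomputable def polyIter (f : Polynomial ℂ) : ℕ → Polynomial ℂ
  | 0 => Polynomial.X
  | n + 1 => f.comp (polyIter f n)

/-- The chordal distance `[w,a]` between two points of `ℂ`. -/
noncomputable def chordal (w a : ℂ) : ℝ :=
  ‖w - a‖ / (Real.sqrt (1 + ‖w‖ ^ 2) * Real.sqrt (1 + ‖a‖ ^ 2))

/-!
By the chain rule `(fⁿ)'(z) = ∏_{j<n} f'(fʲ z)`, and factoring `f' = d a_d ∏_c (X - c)` over its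
roots turns `log |(fⁿ)'(z)|` into `n log (d |a_d|) + ∑_j ∑_c log |fʲ z - c|`. Each
`log |w - c|` is `log [w, c] + ½ log (1 + |w|²) + ½ log (1 + |c|²)`, and `f'` has `d - 1` roots.
Finally the functional equation `g ∘ f = d g` gives `(d - 1) ∑_{j<n} g (fʲ z) = (dⁿ - 1) g z`.
-/

open Topology

section Iterates

variable (f : ℂ[X])

lemma eval_polyIter_succ (m : ℕ) (z : ℂ) :
    (polyIter f (m + 1)).eval z = f.eval ((polyIter f m).eval z) :=
  eval_comp

lemma eval_polyIter_succ' (m : ℕ) (z : ℂ) :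
    (polyIter f (m + 1)).eval z = (polyIter f m).eval (f.eval z) := by
  induction m with
  | zero => simp [polyIter]
  | succ k ih => rw [eval_polyIter_succ, ih, eval_polyIter_succ]

lemma eval_derivative_polyIter (m : ℕ) (z : ℂ) :
    (derivative (polyIter f m)).eval z =
      ∏ j ∈ Finset.range m, (derivative f).eval ((polyIter f j).eval z) := by
  induction m with
  | zero => simp [polyIter]
  | succ k ih =>
    rw [Finset.prod_range_succ, ← ih, polyIter, derivative_comp, eval_mul, eval_comp, mul_comm]

end Iterates

def IsGreenFunction (f : ℂ[X]) (D : ℝ) (g : ℂ → ℝ) : Prop :=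
  ∀ z : ℂ, Tendsto (fun n : ℕ => Real.log (max 1 ‖(polyIter f n).eval z‖) / D ^ n) atTop
    (𝓝 (g z))

namespace IsGreenFunction

variable {f : ℂ[X]} {D : ℝ} {g : ℂ → ℝ}

/-- The sequence defining `g (f u)` is the shift of the one defining `g u`, scaled by `D`. -/
lemma apply_eval (hg : IsGreenFunction f D g) (hD : D ≠ 0) (u : ℂ) :
    g (f.eval u) = D * g u := by
  refine tendsto_nhds_unique (hg (f.eval u)) ?_
  refine (((hg u).comp (tendsto_add_atTop_nat 1)).const_mul D).congr fun m => ?_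
  simp only [Function.comp_apply, eval_polyIter_succ', pow_succ]
  field_simp

lemma apply_polyIter_eval (hg : IsGreenFunction f D g) (hD : D ≠ 0) (j : ℕ) (z : ℂ) :
    g ((polyIter f j).eval z) = D ^ j * g z := by
  induction j with
  | zero => simp [polyIter]
  | succ k ih => rw [eval_polyIter_succ, hg.apply_eval hD, ih, pow_succ]; ring

lemma sum_orbit (hg : IsGreenFunction f D g) (hD : D ≠ 0) (n : ℕ) (z : ℂ) :
    (D - 1) * ∑ j ∈ Finset.range n, g ((polyIter f j).eval z) = (D ^ n - 1) * g z := by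
  simp only [hg.apply_polyIter_eval hD, ← Finset.sum_mul, ← geom_sum_mul]
  ring

end IsGreenFunction

lemma log_norm_sub_eq_log_chordal {u c : ℂ} (h : u ≠ c) :
    Real.log ‖u - c‖ =
      Real.log (chordal u c) + (1 / 2) * Real.log (1 + ‖u‖ ^ 2) +
        (1 / 2) * Real.log (1 + ‖c‖ ^ 2) := by
  have hsqrt (v : ℂ) : Real.sqrt (1 + ‖v‖ ^ 2) ≠ 0 := by positivity
  have hlog_sqrt (v : ℂ) : Real.log (Real.sqrt (1 + ‖v‖ ^ 2)) =
      (1 / 2) * Real.log (1 + ‖v‖ ^ 2) := by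
    rw [Real.log_sqrt (by positivity)]; ring
  rw [chordal, Real.log_div (by simpa [sub_eq_zero] using h) (mul_ne_zero (hsqrt u) (hsqrt c)),
    Real.log_mul (hsqrt u) (hsqrt c), hlog_sqrt, hlog_sqrt]
  ring

lemma log_norm_multiset_prod_sub {s : Multiset ℂ} {u : ℂ} (hu : u ∉ s) :
    Real.log ‖(s.map (u - ·)).prod‖ = (s.map fun c => Real.log ‖u - c‖).sum := by
  induction s using Multiset.induction with
  | empty => simp
  | cons a t ih =>
    have hua : u - a ≠ 0 := sub_ne_zero.mpr fun h => hu (h ▸ Multiset.mem_cons_self u t)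
    have hut : u ∉ t := fun h => hu (Multiset.mem_cons_of_mem h)
    have hprod : (t.map (u - ·)).prod ≠ 0 := by
      simpa [Multiset.prod_eq_zero_iff, sub_eq_zero, eq_comm] using hut
    rw [Multiset.map_cons, Multiset.prod_cons, norm_mul,
      Real.log_mul (norm_ne_zero_iff.mpr hua) (norm_ne_zero_iff.mpr hprod), ih hut,
      Multiset.map_cons, Multiset.sum_cons]

lemma log_norm_eval_eq_sum_log_chordal (p : ℂ[X]) {u : ℂ} (hu : p.eval u ≠ 0) :
    Real.log ‖p.eval u‖ =
      (p.roots.map fun c => Real.log (chordal u c)).sum +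
        p.natDegree * ((1 / 2) * Real.log (1 + ‖u‖ ^ 2)) +
        ((p.roots.map fun c => (1 / 2) * Real.log (1 + ‖c‖ ^ 2)).sum +
          Real.log ‖p.leadingCoeff‖) := by
  have hroots : u ∉ p.roots := fun h => hu (isRoot_of_mem_roots h)
  rw [(IsAlgClosed.splits p).eval_eq_prod_roots] at hu ⊢
  obtain ⟨hlc, hprod⟩ := mul_ne_zero_iff.mp hu
  rw [norm_mul, Real.log_mul (norm_ne_zero_iff.mpr hlc) (norm_ne_zero_iff.mpr hprod),
    log_norm_multiset_prod_sub hroots, Multiset.map_congr rfl fun c hc =>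
      log_norm_sub_eq_log_chordal (ne_of_mem_of_not_mem hc hroots).symm,
    Multiset.sum_map_add, Multiset.sum_map_add, Multiset.map_const', Multiset.sum_replicate,
    nsmul_eq_mul, IsAlgClosed.card_roots_eq_natDegree]
  ring

lemma log_norm_derivative_polyIter_eval (f : ℂ[X]) (n : ℕ) {z : ℂ}
    (hz : (derivative (polyIter f n)).eval z ≠ 0) :
    Real.log ‖(derivative (polyIter f n)).eval z‖ =
      ∑ j ∈ Finset.range n,
          ((derivative f).roots.map fun c => Real.log (chordal ((polyIter f j).eval z) c)).sum +
        (derivative f).natDegree *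
          ∑ j ∈ Finset.range n, (1 / 2) * Real.log (1 + ‖(polyIter f j).eval z‖ ^ 2) +
        n * (((derivative f).roots.map fun c => (1 / 2) * Real.log (1 + ‖c‖ ^ 2)).sum +
          Real.log ‖(derivative f).leadingCoeff‖) := by
  rw [eval_derivative_polyIter] at hz ⊢
  have hfactor := Finset.prod_ne_zero_iff.mp hz
  rw [Complex.norm_prod, Real.log_prod fun j hj => norm_ne_zero_iff.mpr (hfactor j hj),
    Finset.sum_congr rfl fun j hj => log_norm_eval_eq_sum_log_chordal _ (hfactor j hj),
    Finset.sum_add_distrib, Finset.sum_add_distrib, ← Finset.mul_sum, Finset.sum_const,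
    Finset.card_range, nsmul_eq_mul]

theorem stmt11 (f : Polynomial ℂ) (d : ℕ) (hd : 1 < d) (hdeg : f.natDegree = d)
    (g : ℂ → ℝ)
    (hg : ∀ z : ℂ, Tendsto
      (fun n : ℕ => Real.log (max 1 ‖(polyIter f n).eval z‖) / (d : ℝ) ^ n)
      atTop (nhds (g z)))
    (n : ℕ) (hn : 1 ≤ n) (z : ℂ)
    (hz : (Polynomial.derivative (polyIter f n)).eval z ≠ 0) :
    Real.log ‖(Polynomial.derivative (polyIter f n)).eval z‖ /
        ((d : ℝ) ^ n - 1) - g z =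
      (∑ j ∈ Finset.range n,
          (((Polynomial.derivative f).roots).map
            (fun c => Real.log (chordal ((polyIter f j).eval z) c))).sum) /
        ((d : ℝ) ^ n - 1) +
      ((d : ℝ) - 1) / ((d : ℝ) ^ n - 1) *
        ∑ j ∈ Finset.range n,
          ((1 / 2) * Real.log (1 + ‖(polyIter f j).eval z‖ ^ 2) -
            g ((polyIter f j).eval z)) +
      ((((Polynomial.derivative f).roots).map
          (fun c => (1 / 2) * Real.log (1 + ‖c‖ ^ 2))).sum +
        Real.log d + Real.log ‖f.leadingCoeff‖) *
        n / ((d : ℝ) ^ n - 1) := by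
  have hd1 : (1 : ℝ) < d := by exact_mod_cast hd
  have hdn : (d : ℝ) ^ n - 1 ≠ 0 := (sub_pos.mpr (one_lt_pow₀ hd1 (by omega))).ne'
  have hlc : f.leadingCoeff ≠ 0 := leadingCoeff_ne_zero.mpr (by rintro rfl; simp at hdeg; omega)
  have horbit := IsGreenFunction.sum_orbit hg (by positivity) n z
  rw [log_norm_derivative_polyIter_eval f n hz, natDegree_derivative, leadingCoeff_derivative,
    hdeg, Nat.cast_sub hd.le, norm_mul, Complex.norm_natCast,
    Real.log_mul (norm_ne_zero_iff.mpr hlc) (by positivity), Finset.sum_sub_distrib]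
  field_simp
  linear_combination horbit
end

section
/- Let f ∈ ℂ[z] be a polynomial of degree d > 1, let a ∈ ℂ, and let R > 0 be such that the circle {z ∈ ℂ : |z| = R} is contained in I_∞(f) \ ⋃_{n≥0} (f^n)^{-1}(C(f)∩ℂ). Then limsup_{n→∞} sup_{|z|≤R} (d^n−1)^{-1}·log|(f^n)'(z) − a| ≤ sup_{|z|=R} g_f(z) < ∞; in particular, the sequence of functions z ↦ (d^n−1)^{-1}·log|(f^n)'(z) − a| is uniformly bounded from above on {|z| ≤ R} for n large enough. -/
/-!
By the chain rule `(fⁿ)'(z) = ∏_{k<n} f'(fᵏ z)`, and `|f'(w)| ≤ C·max(1,|w|)^(d-1)`.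
Because `log max(1,|f(w)|) - d·log max(1,|w|)` is bounded, comparing `log max(1,|fᵏ z|)/dᵏ`
with its limit `g(z)` gives `log max(1,|fᵏ z|) ≤ dᵏ·g(z) + B` uniformly in `k` and `z`.
Summing over `k < n` yields `log |(fⁿ)'(z)| ≤ (dⁿ - 1)·g(z) + O(n)`, which on the circle is at
most `(dⁿ - 1)·sup g + O(n)`; the maximum modulus principle extends the bound for `(fⁿ)' - a`
to the disc, and `O(n)/(dⁿ - 1) → 0`.
-/

open Polynomial MeasureTheory Filter

/-- The basin of infinity `I_∞(f) = {z : |f^n(z)| → ∞}`. -/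
def basinInfty (f : Polynomial ℂ) : Set ℂ :=
  {z : ℂ | Tendsto (fun n : ℕ => ‖(polyIter f n).eval z‖) atTop atTop}

open Asymptotics Bornology Topology

theorem exists_forall_le_mul_of_isBigO_cobounded {E : Type*} [PseudoMetricSpace E]
    [ProperSpace E] {F G : E → ℝ} (hF : Continuous F) (hG : ∀ x, 1 ≤ G x)
    (h : F =O[cobounded E] G) : ∃ C, 1 ≤ C ∧ ∀ x, F x ≤ C * G x := by
  obtain ⟨c, hc⟩ := h.bound
  have hbdd : IsBounded {x | ‖F x‖ ≤ c * ‖G x‖}ᶜ := isBounded_compl_iff.2 hc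
  obtain ⟨B, hB⟩ := hbdd.isCompact_closure.exists_bound_of_continuousOn hF.continuousOn
  refine ⟨max 1 (max c B), le_max_left _ _, fun x => ?_⟩
  have hGx : ‖G x‖ = G x := Real.norm_of_nonneg (zero_le_one.trans (hG x))
  have hC : max c B ≤ max 1 (max c B) := le_max_right _ _
  by_cases hx : ‖F x‖ ≤ c * ‖G x‖
  · calc F x ≤ c * G x := hGx ▸ (le_abs_self _).trans hx
      _ ≤ max 1 (max c B) * G x := by
        gcongr
        exacts [zero_le_one.trans (hG x), (le_max_left _ _).trans hC]
  · calc F x ≤ B := (le_abs_self _).trans (hB x (subset_closure hx))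
      _ ≤ max 1 (max c B) := (le_max_right _ _).trans hC
      _ ≤ max 1 (max c B) * G x := le_mul_of_one_le_right (by positivity) (hG x)

namespace Polynomial

variable {𝕜 : Type*} [NormedField 𝕜] [ProperSpace 𝕜]

theorem exists_max_one_norm_eval_le (p : 𝕜[X]) {m : ℕ} (hm : p.natDegree ≤ m) :
    ∃ C, 1 ≤ C ∧ ∀ w, max 1 ‖p.eval w‖ ≤ C * max 1 ‖w‖ ^ m := by
  have hO : (fun w => ‖p.eval w‖) =O[cobounded 𝕜] fun w => max 1 ‖w‖ ^ m := by
    refine (isEquivalent_cobounded_leading_monomial.isBigO.trans ?_).norm_left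
    refine ((isBigO_refl (· ^ p.natDegree) _).const_mul_left _).trans
      ((isBigO_pow_pow_cobounded_of_le hm).trans
        (IsBigO.of_bound 1 (Eventually.of_forall fun w => ?_)))
    rw [norm_pow, one_mul, Real.norm_eq_abs]
    exact (pow_le_pow_left₀ (norm_nonneg _) (le_max_right _ _) _).trans (le_abs_self _)
  obtain ⟨C, hC1, hC⟩ := exists_forall_le_mul_of_isBigO_cobounded (by fun_prop)
    (fun w => one_le_pow₀ (le_max_left 1 ‖w‖)) hO
  exact ⟨C, hC1, fun w =>
    max_le (one_le_mul_of_one_le_of_one_le hC1 (one_le_pow₀ (le_max_left _ _))) (hC w)⟩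

theorem exists_max_one_norm_pow_le (p : 𝕜[X]) :
    ∃ C, 1 ≤ C ∧ ∀ w, max 1 ‖w‖ ^ p.natDegree ≤ C * max 1 ‖p.eval w‖ := by
  rcases eq_or_ne p 0 with rfl | hp
  · exact ⟨1, le_rfl, fun w => by simp⟩
  have hO : (fun w => max 1 ‖w‖ ^ p.natDegree) =O[cobounded 𝕜] fun w => max 1 ‖p.eval w‖ := by
    have hmono : (fun w : 𝕜 => w ^ p.natDegree) =O[cobounded 𝕜] p.eval :=
      (isBigO_const_mul_left_iff (leadingCoeff_ne_zero.2 hp)).1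
        isEquivalent_cobounded_leading_monomial.symm.isBigO
    refine IsBigO.trans ?_ (hmono.trans (IsBigO.of_bound 1 (Eventually.of_forall fun w => ?_)))
    · refine IsBigO.of_bound 1 ?_
      filter_upwards [tendsto_norm_cobounded_atTop.eventually_ge_atTop 1] with w hw
      simp [max_eq_right hw]
    · rw [one_mul, Real.norm_eq_abs]
      exact (le_max_right _ _).trans (le_abs_self _)
  exact exists_forall_le_mul_of_isBigO_cobounded (by fun_prop) (fun w => le_max_left _ _) hO

theorem exists_abs_log_max_one_norm_eval_sub_le (p : 𝕜[X]) :
    ∃ β, ∀ w, |Real.log (max 1 ‖p.eval w‖) - p.natDegree * Real.log (max 1 ‖w‖)| ≤ β := by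
  obtain ⟨C₁, hC₁, hup⟩ := p.exists_max_one_norm_eval_le le_rfl
  obtain ⟨C₂, hC₂, hlow⟩ := p.exists_max_one_norm_pow_le
  refine ⟨max (Real.log C₁) (Real.log C₂), fun w => abs_le.2 ⟨?_, ?_⟩⟩
  · have h := Real.log_le_log (by positivity) (hlow w)
    rw [Real.log_mul (by positivity) (by positivity), Real.log_pow] at h
    linarith [le_max_right (Real.log C₁) (Real.log C₂)]
  · have h := Real.log_le_log (by positivity) (hup w)
    rw [Real.log_mul (by positivity) (by positivity), Real.log_pow] at h
    linarith [le_max_left (Real.log C₁) (Real.log C₂)]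

end Polynomial

theorem le_pow_mul_add_of_tendsto_div_pow {u : ℕ → ℝ} {d β g : ℝ} (hd : 1 < d)
    (hu : ∀ k, d * u k - β ≤ u (k + 1)) (hg : Tendsto (fun n => u n / d ^ n) atTop (𝓝 g))
    (k : ℕ) : u k ≤ d ^ k * g + β / (d - 1) := by
  generalize hb_def : β / (d - 1) = b
  have hb : (d - 1) * b = β := hb_def ▸ mul_div_cancel₀ _ (sub_ne_zero.2 hd.ne')
  have hmono : Monotone fun n => (u n - b) / d ^ n := by
    refine monotone_nat_of_le_succ fun n => ?_
    have key : (u n - b) * d ≤ u (n + 1) - b := by linear_combination hu n - hb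
    rw [div_le_div_iff₀ (by positivity) (by positivity)]
    calc (u n - b) * d ^ (n + 1) = (u n - b) * d * d ^ n := by ring
      _ ≤ (u (n + 1) - b) * d ^ n := by gcongr
  have hlim : Tendsto (fun n => (u n - b) / d ^ n) atTop (𝓝 g) := by
    have h0 : Tendsto (fun n => b * (d⁻¹) ^ n) atTop (𝓝 0) := by
      simpa using (tendsto_pow_atTop_nhds_zero_of_lt_one (by positivity)
        (inv_lt_one_of_one_lt₀ hd)).const_mul b
    have h := hg.sub h0
    rw [sub_zero] at h
    exact h.congr fun n => by rw [inv_pow]; ring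
  have h := hmono.ge_of_tendsto hlim k
  rw [div_le_iff₀ (by positivity)] at h
  linarith

theorem abs_sub_pow_mul_le_of_tendsto_div_pow {u : ℕ → ℝ} {d β g : ℝ} (hd : 1 < d)
    (hu : ∀ k, |u (k + 1) - d * u k| ≤ β) (hg : Tendsto (fun n => u n / d ^ n) atTop (𝓝 g))
    (k : ℕ) : |u k - d ^ k * g| ≤ β / (d - 1) := by
  have hupper := le_pow_mul_add_of_tendsto_div_pow (β := β) hd
    (fun k => by linarith [(abs_le.1 (hu k)).1]) hg k
  have hlower := le_pow_mul_add_of_tendsto_div_pow (u := fun n => -u n) (β := β) (g := -g) hd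
    (fun k => by linarith [(abs_le.1 (hu k)).2]) (by simpa only [neg_div] using hg.neg) k
  exact abs_le.2 ⟨by linarith, by linarith⟩

theorem tendsto_affine_div_pow_sub_one {r : ℝ} (hr : 1 < r) (K c : ℝ) :
    Tendsto (fun n : ℕ => (n * K + c) / (r ^ n - 1)) atTop (𝓝 0) := by
  have hnum : Tendsto (fun n : ℕ => (n * K + c) / r ^ n) atTop (𝓝 0) := by
    have h := ((tendsto_pow_const_div_const_pow_of_one_lt 1 hr).mul_const K).add
      ((tendsto_pow_const_div_const_pow_of_one_lt 0 hr).mul_const c)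
    simp only [pow_one, pow_zero, zero_mul, add_zero] at h
    refine h.congr fun n => ?_
    ring
  have hden : Tendsto (fun n : ℕ => 1 - (r⁻¹) ^ n) atTop (𝓝 1) := by
    simpa using (tendsto_pow_atTop_nhds_zero_of_lt_one (by positivity)
      (inv_lt_one_of_one_lt₀ hr)).const_sub 1
  have h := hnum.div hden one_ne_zero
  rw [zero_div] at h
  refine h.congr fun n => ?_
  have hrn : r ^ n ≠ 0 := by positivity
  have hden_eq : 1 - r⁻¹ ^ n = (r ^ n - 1) / r ^ n := by rw [inv_pow]; field_simp
  simp only [Pi.div_apply, hden_eq]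
  exact div_div_div_cancel_right₀ hrn _ _

theorem Real.log_le_of_le_exp {x y : ℝ} (hx : 0 ≤ x) (hy : 0 ≤ y) (h : x ≤ Real.exp y) :
    Real.log x ≤ y := by
  rcases hx.eq_or_lt with rfl | hx
  · rwa [Real.log_zero]
  · exact (Real.log_le_iff_le_exp hx).2 h

theorem exists_forall_div_pow_sub_one_le {α : Type*} {s : Set α} {F : ℕ → α → ℝ}
    {r G K c : ℝ} (hr : 1 < r) (hF : ∀ n, ∀ x ∈ s, F n x ≤ (r ^ n - 1) * G + (n * K + c))
    {ε : ℝ} (hε : 0 < ε) : ∃ N, ∀ n, N ≤ n → ∀ x ∈ s, F n x / (r ^ n - 1) ≤ G + ε := by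
  obtain ⟨N, hN⟩ := eventually_atTop.1
    (((tendsto_affine_div_pow_sub_one hr K c).eventually (gt_mem_nhds hε)).and
      (eventually_ge_atTop 1))
  refine ⟨N, fun n hn x hx => ?_⟩
  obtain ⟨hsmall, hn1⟩ := hN n hn
  have hpos : 0 < r ^ n - 1 := sub_pos.2 (one_lt_pow₀ hr (by omega))
  rw [div_lt_iff₀ hpos] at hsmall
  rw [div_le_iff₀ hpos]
  linarith [hF n x hx]

theorem Complex.norm_le_of_forall_norm_eq_le {E : Type*} [NormedAddCommGroup E]
    [NormedSpace ℂ E] {F : ℂ → E} (hF : Differentiable ℂ F) {R M : ℝ} (hR : 0 < R)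
    (hM : ∀ w : ℂ, ‖w‖ = R → ‖F w‖ ≤ M) {z : ℂ} (hz : ‖z‖ ≤ R) : ‖F z‖ ≤ M := by
  refine Complex.norm_le_of_forall_mem_frontier_norm_le (U := Metric.ball 0 R)
    Metric.isBounded_ball hF.diffContOnCl (fun w hw => hM w ?_) ?_
  · rwa [frontier_ball 0 hR.ne', mem_sphere_zero_iff_norm] at hw
  · rwa [closure_ball 0 hR.ne', mem_closedBall_zero_iff]

theorem log_norm_sub_le_of_forall_norm_eq_le {F : ℂ → ℂ} (hF : Differentiable ℂ F) {R T : ℝ}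
    (hR : 0 < R) (hT : 0 ≤ T) (hFR : ∀ w : ℂ, ‖w‖ = R → ‖F w‖ ≤ Real.exp T) (a : ℂ) {z : ℂ}
    (hz : ‖z‖ ≤ R) : Real.log ‖F z - a‖ ≤ T + Real.log (1 + ‖a‖) := by
  have ha : 0 ≤ Real.log (1 + ‖a‖) := Real.log_nonneg (by simp)
  refine Real.log_le_of_le_exp (norm_nonneg _) (by positivity) ?_
  rw [Real.exp_add, Real.exp_log (by positivity)]
  refine Complex.norm_le_of_forall_norm_eq_le (hF.sub_const a) hR (fun w hw => ?_) hz
  have hE1 : 1 ≤ Real.exp T := Real.one_le_exp hT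
  calc ‖F w - a‖ ≤ ‖F w‖ + ‖a‖ := norm_sub_le _ _
    _ ≤ Real.exp T * (1 + ‖a‖) := by nlinarith [hFR w hw, norm_nonneg a]

theorem polyIter_zero_eval (f : ℂ[X]) (z : ℂ) : (polyIter f 0).eval z = z :=
  eval_X

theorem polyIter_succ_eval (f : ℂ[X]) (n : ℕ) (z : ℂ) :
    (polyIter f (n + 1)).eval z = f.eval ((polyIter f n).eval z) :=
  eval_comp

theorem derivative_polyIter_eval (f : ℂ[X]) (n : ℕ) (z : ℂ) :
    (derivative (polyIter f n)).eval z =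
      ∏ k ∈ Finset.range n, (derivative f).eval ((polyIter f k).eval z) := by
  induction n with
  | zero => simp [polyIter]
  | succ n ih =>
    rw [polyIter, derivative_comp, eval_mul, eval_comp, ih, Finset.prod_range_succ]

section Green

variable {f : ℂ[X]} {d : ℕ} {g : ℂ → ℝ}

theorem exists_abs_log_max_one_norm_polyIter_sub_le (hd : 1 < d) (hdeg : f.natDegree = d)
    (hg : ∀ z, Tendsto (fun n : ℕ => Real.log (max 1 ‖(polyIter f n).eval z‖) / (d : ℝ) ^ n)
      atTop (𝓝 (g z))) :
    ∃ B, ∀ z k, |Real.log (max 1 ‖(polyIter f k).eval z‖) - (d : ℝ) ^ k * g z| ≤ B := by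
  obtain ⟨β, hβ⟩ := f.exists_abs_log_max_one_norm_eval_sub_le
  refine ⟨β / ((d : ℝ) - 1), fun z k =>
    abs_sub_pow_mul_le_of_tendsto_div_pow (by exact_mod_cast hd) (fun k => ?_) (hg z) k⟩
  rw [polyIter_succ_eval, ← hdeg]
  exact hβ _

theorem bddAbove_image_sphere (hd : 1 < d) (hdeg : f.natDegree = d)
    (hg : ∀ z, Tendsto (fun n : ℕ => Real.log (max 1 ‖(polyIter f n).eval z‖) / (d : ℝ) ^ n)
      atTop (𝓝 (g z))) (R : ℝ) :
    BddAbove (g '' {w : ℂ | ‖w‖ = R}) := by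
  obtain ⟨B, hB⟩ := exists_abs_log_max_one_norm_polyIter_sub_le hd hdeg hg
  refine ⟨Real.log (max 1 R) + B, ?_⟩
  rintro _ ⟨w, hw, rfl⟩
  have h := (abs_le.1 (hB w 0)).1
  rw [polyIter_zero_eval, show ‖w‖ = R from hw, pow_zero, one_mul] at h
  linarith

theorem exists_norm_derivative_polyIter_eval_le (hd : 1 < d) (hdeg : f.natDegree = d)
    (hg : ∀ z, Tendsto (fun n : ℕ => Real.log (max 1 ‖(polyIter f n).eval z‖) / (d : ℝ) ^ n)
      atTop (𝓝 (g z))) :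
    ∃ K, 0 ≤ K ∧ ∀ n z, ‖(derivative (polyIter f n)).eval z‖ ≤
      Real.exp (n * K + ((d : ℝ) ^ n - 1) * g z) := by
  obtain ⟨B, hB⟩ := exists_abs_log_max_one_norm_polyIter_sub_le hd hdeg hg
  obtain ⟨C, hC1, hC⟩ := (derivative f).exists_max_one_norm_eval_le
    ((natDegree_derivative_le f).trans_eq (congrArg (· - 1) hdeg))
  have hB0 : 0 ≤ B := (abs_nonneg _).trans (hB 0 0)
  have hd1 : ((d - 1 : ℕ) : ℝ) = d - 1 := by rw [Nat.cast_sub hd.le, Nat.cast_one]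
  set K := Real.log C + ((d : ℝ) - 1) * B with hK_def
  have hK : 0 ≤ K := add_nonneg (Real.log_nonneg hC1)
    (mul_nonneg (sub_nonneg.2 (by exact_mod_cast hd.le)) hB0)
  have hfactor : ∀ z k, ‖(derivative f).eval ((polyIter f k).eval z)‖ ≤
      Real.exp (K + ((d : ℝ) - 1) * ((d : ℝ) ^ k * g z)) := by
    intro z k
    have hL : max 1 ‖(polyIter f k).eval z‖ ≤ Real.exp ((d : ℝ) ^ k * g z + B) := by
      rw [← Real.log_le_iff_le_exp (by positivity)]
      linarith [(abs_le.1 (hB z k)).2]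
    calc ‖(derivative f).eval ((polyIter f k).eval z)‖
        ≤ C * max 1 ‖(polyIter f k).eval z‖ ^ (d - 1) := (le_max_right _ _).trans (hC _)
      _ ≤ C * Real.exp ((d : ℝ) ^ k * g z + B) ^ (d - 1) := by gcongr
      _ = Real.exp (K + ((d : ℝ) - 1) * ((d : ℝ) ^ k * g z)) := by
        rw [← Real.exp_nat_mul, hd1, ← Real.exp_log (zero_lt_one.trans_le hC1), ← Real.exp_add,
          hK_def]
        congr 1
        ring
  refine ⟨K, hK, fun n z => ?_⟩
  calc ‖(derivative (polyIter f n)).eval z‖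
      = ∏ k ∈ Finset.range n, ‖(derivative f).eval ((polyIter f k).eval z)‖ := by
        rw [derivative_polyIter_eval, norm_prod]
    _ ≤ ∏ k ∈ Finset.range n, Real.exp (K + ((d : ℝ) - 1) * ((d : ℝ) ^ k * g z)) :=
        Finset.prod_le_prod (fun _ _ => norm_nonneg _) fun k _ => hfactor z k
    _ = Real.exp (n * K + ((d : ℝ) ^ n - 1) * g z) := by
        rw [← Real.exp_sum, Finset.sum_add_distrib, Finset.sum_const, Finset.card_range,
          nsmul_eq_mul, ← Finset.mul_sum, ← Finset.sum_mul, ← geom_sum_mul]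
        congr 1
        ring

end Green

theorem stmt13_general (f : Polynomial ℂ) (d : ℕ) (hd : 1 < d) (hdeg : f.natDegree = d)
    (g : ℂ → ℝ)
    (hg : ∀ z : ℂ, Tendsto
      (fun n : ℕ => Real.log (max 1 (‖(polyIter f n).eval z‖)) / (d : ℝ) ^ n)
      atTop (nhds (g z)))
    (a : ℂ) (R : ℝ) (hR : 0 < R) :
    (∀ ε : ℝ, 0 < ε → ∃ N : ℕ, ∀ n : ℕ, N ≤ n → ∀ z : ℂ, ‖z‖ ≤ R →
      Real.log (‖(Polynomial.derivative (polyIter f n)).eval z - a‖) /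
          ((d : ℝ) ^ n - 1) ≤
        sSup (g '' {w : ℂ | ‖w‖ = R}) + ε) ∧
    (∃ M : ℝ, ∃ N : ℕ, ∀ n : ℕ, N ≤ n → ∀ z : ℂ, ‖z‖ ≤ R →
      Real.log (‖(Polynomial.derivative (polyIter f n)).eval z - a‖) /
          ((d : ℝ) ^ n - 1) ≤ M) := by
  obtain ⟨K, hK, hderiv⟩ := exists_norm_derivative_polyIter_eval_le hd hdeg hg
  set G := sSup (g '' {w : ℂ | ‖w‖ = R})
  have hgG : ∀ w : ℂ, ‖w‖ = R → g w ≤ G :=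
    fun w hw => le_csSup (bddAbove_image_sphere hd hdeg hg R) ⟨w, hw, rfl⟩
  have hG : 0 ≤ G := Real.sSup_nonneg <| by
    rintro _ ⟨w, -, rfl⟩
    exact ge_of_tendsto' (hg w) fun n =>
      div_nonneg (Real.log_nonneg (le_max_left _ _)) (by positivity)
  have hbound : ∀ n, ∀ z ∈ {z : ℂ | ‖z‖ ≤ R},
      Real.log ‖(derivative (polyIter f n)).eval z - a‖ ≤
        ((d : ℝ) ^ n - 1) * G + (n * K + Real.log (1 + ‖a‖)) := by
    intro n z hz
    have hpow : 0 ≤ (d : ℝ) ^ n - 1 := sub_nonneg.2 (one_le_pow₀ (by exact_mod_cast hd.le))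
    have h := log_norm_sub_le_of_forall_norm_eq_le (derivative (polyIter f n)).differentiable hR
      (by positivity : 0 ≤ ((d : ℝ) ^ n - 1) * G + n * K)
      (fun w hw => (hderiv n w).trans (Real.exp_le_exp.2 (by nlinarith [hgG w hw]))) a hz
    linarith
  have hmain := fun ε (hε : 0 < ε) =>
    exists_forall_div_pow_sub_one_le (by exact_mod_cast hd) hbound hε
  exact ⟨hmain, G + 1, hmain 1 one_pos⟩

theorem stmt13 (f : Polynomial ℂ) (d : ℕ) (hd : 1 < d) (hdeg : f.natDegree = d)
    (g : ℂ → ℝ)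
    (hg : ∀ z : ℂ, Tendsto
      (fun n : ℕ => Real.log (max 1 (‖(polyIter f n).eval z‖)) / (d : ℝ) ^ n)
      atTop (nhds (g z)))
    (a : ℂ) (R : ℝ) (hR : 0 < R)
    (hcircle : ∀ z : ℂ, ‖z‖ = R →
      z ∈ basinInfty f \
        ⋃ n : ℕ, {w : ℂ | (Polynomial.derivative f).eval ((polyIter f n).eval w) = 0}) :
    (∀ ε : ℝ, 0 < ε → ∃ N : ℕ, ∀ n : ℕ, N ≤ n → ∀ z : ℂ, ‖z‖ ≤ R →
      Real.log (‖(Polynomial.derivative (polyIter f n)).eval z - a‖) /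
          ((d : ℝ) ^ n - 1) ≤
        sSup (g '' {w : ℂ | ‖w‖ = R}) + ε) ∧
    (∃ M : ℝ, ∃ N : ℕ, ∀ n : ℕ, N ≤ n → ∀ z : ℂ, ‖z‖ ≤ R →
      Real.log (‖(Polynomial.derivative (polyIter f n)).eval z - a‖) /
          ((d : ℝ) ^ n - 1) ≤ M) :=
  stmt13_general f d hd hdeg g hg a R hR
end
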